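/- arXiv:2207.07208 — 3 statements merged into one kernel-verified Lean document; each statement's English description precedes it below -/
import Mathlib

section
/- Let ‖·‖_p be a norm on ℝ^d, z ∈ ℝ^d, i* ∈ argmin_{i∈I_y} ‖z − w_i‖_p, and ρ_{i,j} = inf{‖x − z‖_p : ‖x − w_i‖_p ≥ ‖x − w_j‖_p}. Then min_{j∈I_y^c} max_{i∈I_y} ρ_{i,j} ≥ min_{j∈I_y^c} ρ_{i*,j} ≥ max{0, (min_{j∈I_y^c} ‖z − w_j‖_p − min_{i∈I_y} ‖z − w_i‖_p)/2}. -/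
noncomputable def lpnorm (p : ENNReal) [Fact (1 ≤ p)] {n : ℕ} (x : Fin n → ℝ) : ℝ :=
  ‖(WithLp.equiv p (Fin n → ℝ)).symm x‖

lemma lpnorm_nonneg (p : ENNReal) [Fact (1 ≤ p)] {n : ℕ} (x : Fin n → ℝ) :
    0 ≤ lpnorm p x := norm_nonneg _

lemma lpnorm_sub_rev (p : ENNReal) [Fact (1 ≤ p)] {n : ℕ} (x y : Fin n → ℝ) :
    lpnorm p (x - y) = lpnorm p (y - x) := by
  show ‖(WithLp.equiv p (Fin n → ℝ)).symm x - (WithLp.equiv p (Fin n → ℝ)).symm y‖ = _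
  exact norm_sub_rev _ _

lemma lpnorm_triangle (p : ENNReal) [Fact (1 ≤ p)] {n : ℕ} (x y : Fin n → ℝ) :
    lpnorm p (x + y) ≤ lpnorm p x + lpnorm p y := by
  show ‖(WithLp.equiv p (Fin n → ℝ)).symm x + (WithLp.equiv p (Fin n → ℝ)).symm y‖ ≤ _
  exact norm_add_le _ _

/-- Theorem 2.7: the min-max relaxation lower bound is at least as good as the
classical margin bound of Saralajew et al. -/
theorem minmax_ge_margin_bound {n : ℕ} (p : ENNReal) [Fact (1 ≤ p)]
    {ι : Type*} (w : ι → (Fin n → ℝ)) (Iy Ic : Finset ι) (hy : Iy.Nonempty) (hc : Ic.Nonempty)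
    (z : Fin n → ℝ)
    (ρ : ι → ι → ℝ)
    (hρ : ∀ i j, ρ i j =
      sInf {r : ℝ | ∃ x : Fin n → ℝ, lpnorm p (x - w i) ≥ lpnorm p (x - w j) ∧
        r = lpnorm p (x - z)})
    (istar : ι) (histar : istar ∈ Iy)
    (hmin : ∀ i ∈ Iy, lpnorm p (z - w istar) ≤ lpnorm p (z - w i)) :
    Ic.inf' hc (fun j => Iy.sup' hy (fun i => ρ i j)) ≥ Ic.inf' hc (fun j => ρ istar j) ∧
    Ic.inf' hc (fun j => ρ istar j) ≥
      max 0 ((Ic.inf' hc (fun j => lpnorm p (z - w j)) -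
        Iy.inf' hy (fun i => lpnorm p (z - w i))) / 2) := by
  constructor
  · apply Finset.le_inf'
    intro j hj
    exact le_trans (Finset.inf'_le _ hj) (Finset.le_sup' (fun i => ρ i j) histar)
  · apply Finset.le_inf'
    intro j hj
    -- key pointwise bound: ρ istar j ≥ max 0 ((‖z - w j‖ - ‖z - w istar‖)/2)
    have hIyinf : Iy.inf' hy (fun i => lpnorm p (z - w i)) = lpnorm p (z - w istar) := by
      apply le_antisymm
      · exact Finset.inf'_le _ histar
      · exact Finset.le_inf' _ _ hmin
    have hIcinf : Ic.inf' hc (fun j' => lpnorm p (z - w j')) ≤ lpnorm p (z - w j) :=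
      Finset.inf'_le _ hj
    rw [hρ]
    apply le_csInf
    · refine ⟨lpnorm p (w j - z), w j, ?_, rfl⟩
      have h0 : lpnorm p ((w j : Fin n → ℝ) - w j) = 0 := by
        simp [lpnorm]
      rw [show (w j : Fin n → ℝ) - w j = 0 by ring] at h0 ⊢
      rw [h0]
      exact lpnorm_nonneg p _
    · rintro r ⟨x, hx, rfl⟩
      refine max_le (lpnorm_nonneg p _) ?_
      have key : lpnorm p (z - w j) ≤ 2 * lpnorm p (x - z) + lpnorm p (z - w istar) := by
        have h1 : lpnorm p (z - w j) ≤ lpnorm p (z - x) + lpnorm p (x - w j) := by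
          have := lpnorm_triangle p (z - x) (x - w j)
          simpa using this
        have h2 : lpnorm p (x - w istar) ≤ lpnorm p (x - z) + lpnorm p (z - w istar) := by
          have := lpnorm_triangle p (x - z) (z - w istar)
          simpa using this
        have h3 : lpnorm p (z - x) = lpnorm p (x - z) := lpnorm_sub_rev p z x
        linarith
      rw [hIyinf]
      linarith
end

section
/- Let u, v, z ∈ ℝ^d with u ≠ v. Then the minimal ε ≥ 0 such that ‖z + ε·sign(v − u) − u‖₂² ≥ ‖z + ε·sign(v − u) − v‖₂² equals max{0, (‖z − v‖₂² − ‖z − u‖₂²)/(2‖v − u‖₁)}, where sign is applied coordinate-wise. -/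
instance : Fact ((1 : ENNReal) ≤ 1) := ⟨le_rfl⟩

lemma lpnorm_two_sq {n : ℕ} (x : Fin n → ℝ) : lpnorm 2 x ^ 2 = ∑ i, x i ^ 2 := by
  rw [lpnorm, EuclideanSpace.norm_eq, Real.sq_sqrt (by positivity)]
  simp [sq_abs]

lemma lpnorm_one_eq {n : ℕ} (x : Fin n → ℝ) : lpnorm 1 x = ∑ i, |x i| := by
  rw [lpnorm, PiLp.norm_eq_sum (by norm_num : 0 < (1 : ENNReal).toReal)]
  simp

lemma real_sign_mul_self (t : ℝ) : Real.sign t * t = |t| := by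
  rcases lt_trichotomy t 0 with h | h | h
  · rw [Real.sign_of_neg h, abs_of_neg h]; ring
  · simp [h]
  · rw [Real.sign_of_pos h, abs_of_pos h]; ring

/-- The minimal `ε ≥ 0` such that `z + ε·sign(v-u)` satisfies the ℓ₂ decision-region
constraint recovers the hyperplane distance formula with the dual norm ℓ₁. -/
theorem linf_ball_l2_certification {d : ℕ} (u v z : Fin d → ℝ) (hne : u ≠ v) :
    IsLeast {ε : ℝ | 0 ≤ ε ∧
        lpnorm 2 ((z + ε • fun l => Real.sign (v l - u l)) - u) ^ 2 ≥
          lpnorm 2 ((z + ε • fun l => Real.sign (v l - u l)) - v) ^ 2}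
      (max 0 ((lpnorm 2 (z - v) ^ 2 - lpnorm 2 (z - u) ^ 2) / (2 * lpnorm 1 (v - u)))) := by
  set s : Fin d → ℝ := fun l => Real.sign (v l - u l) with hs
  set A : ℝ := ∑ i, (z i - u i) ^ 2 with hA
  set B : ℝ := ∑ i, (z i - v i) ^ 2 with hB
  set L : ℝ := ∑ i, |v i - u i| with hL
  have hLpos : 0 < L := by
    obtain ⟨i, hi⟩ : ∃ i, u i ≠ v i := by
      by_contra h; push_neg at h; exact hne (funext h)
    exact Finset.sum_pos' (fun j _ => abs_nonneg _)
      ⟨i, Finset.mem_univ i, abs_pos.mpr (sub_ne_zero.mpr (Ne.symm hi))⟩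
  have hBA : lpnorm 2 (z - v) ^ 2 - lpnorm 2 (z - u) ^ 2 = B - A := by
    rw [lpnorm_two_sq, lpnorm_two_sq]; simp [hA, hB]
  have hLnorm : lpnorm 1 (v - u) = L := by
    rw [lpnorm_one_eq]; simp [hL]
  have key : ∀ ε : ℝ,
      (lpnorm 2 ((z + ε • s) - u) ^ 2 ≥ lpnorm 2 ((z + ε • s) - v) ^ 2) ↔
        B - A ≤ 2 * ε * L := by
    intro ε
    rw [lpnorm_two_sq, lpnorm_two_sq]
    have hdiff : (∑ i, ((z + ε • s) - u) i ^ 2) - (∑ i, ((z + ε • s) - v) i ^ 2)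
        = A - B + 2 * ε * L := by
      rw [← Finset.sum_sub_distrib]
      have : ∀ i ∈ Finset.univ, ((z + ε • s) - u) i ^ 2 - ((z + ε • s) - v) i ^ 2
          = (z i - u i) ^ 2 - (z i - v i) ^ 2 + 2 * ε * (s i * (v i - u i)) := by
        intro i _
        simp only [Pi.sub_apply, Pi.add_apply, Pi.smul_apply, smul_eq_mul]
        ring
      rw [Finset.sum_congr rfl this]
      have hsv : ∀ i, s i * (v i - u i) = |v i - u i| := fun i => real_sign_mul_self _
      simp only [hsv]
      rw [Finset.sum_add_distrib, Finset.sum_sub_distrib, ← Finset.mul_sum]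

    constructor
    · intro h; linarith
    · intro h; linarith
  set M : ℝ := (B - A) / (2 * L) with hM
  rw [hBA, hLnorm]
  constructor
  · refine ⟨le_max_left _ _, (key _).mpr ?_⟩
    have h1 : M ≤ max 0 M := le_max_right _ _
    have : M * (2 * L) ≤ max 0 M * (2 * L) :=
      mul_le_mul_of_nonneg_right h1 (by linarith)
    rw [hM, div_mul_cancel₀ _ (by linarith : (2 : ℝ) * L ≠ 0)] at this
    linarith
  · rintro ε ⟨hε0, hε⟩
    have h2 : B - A ≤ 2 * ε * L := (key ε).mp hε
    have hMε : M ≤ ε := by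
      rw [hM, div_le_iff₀ (by linarith : 0 < 2 * L)]
      linarith
    exact max_le hε0 hMε
end

section
/- Let u, v, z ∈ ℝ^d. If there exists x ∈ ℝ^d with ‖x − u‖_∞ ≥ ‖x − v‖_∞, then there exists x' ∈ ℝ^d differing from z in at most one coordinate with ‖x' − z‖₁ ≤ ‖x − z‖₁ and ‖x' − u‖_∞ ≥ ‖x' − v‖_∞. -/
lemma lpnorm_one_eq_sum {d : ℕ} (y : Fin d → ℝ) : lpnorm 1 y = ∑ i, |y i| := by
  have : ((1 : ENNReal)).toReal ≠ 0 := by norm_num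
  simp [lpnorm, PiLp.norm_eq_sum (by norm_num : 0 < ((1:ENNReal)).toReal),
    Real.norm_eq_abs]

/-- An optimal ℓ₁ perturbation reaching the ℓ_∞ decision region of `v` against `u`
can be chosen supported on a single coordinate. Here `‖·‖` on `Fin d → ℝ` is the sup-norm. -/
theorem l1_to_linf_region_single_coordinate {d : ℕ} [Nonempty (Fin d)] (u v z : Fin d → ℝ)
    (x : Fin d → ℝ) (hx : ‖x - u‖ ≥ ‖x - v‖) :
    ∃ (x' : Fin d → ℝ) (l : Fin d), (∀ k : Fin d, k ≠ l → x' k = z k) ∧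
      lpnorm 1 (x' - z) ≤ lpnorm 1 (x - z) ∧ ‖x' - u‖ ≥ ‖x' - v‖ := by
  obtain ⟨l, -, hl⟩ := Finset.exists_max_image Finset.univ (fun k => |x k - u k|)
    ⟨Classical.arbitrary _, Finset.mem_univ _⟩
  set s₀ : ℝ := ∑ k ∈ Finset.univ.erase l, |x k - z k| with hs₀def
  have hs₀ : 0 ≤ s₀ := Finset.sum_nonneg fun _ _ => abs_nonneg _
  set σ : ℝ := if u l ≤ x l then 1 else -1 with hσdef
  set t : ℝ := x l + σ * s₀ with htdef
  have hσabs : |σ| = 1 := by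
    rcases le_or_gt (u l) (x l) with h | h <;> simp [hσdef, h, not_le.2]
  have habs : |t - u l| = |x l - u l| + s₀ := by
    rcases le_or_gt (u l) (x l) with h | h
    · have : t - u l = (x l - u l) + s₀ := by simp [htdef, hσdef, h]; ring
      rw [this, abs_of_nonneg (by linarith [sub_nonneg.2 h]),
        abs_of_nonneg (sub_nonneg.2 h)]
    · have : t - u l = (x l - u l) - s₀ := by simp [htdef, hσdef, not_le.2 h]; ring
      rw [this, abs_of_nonpos (by nlinarith), abs_of_nonpos (by linarith)]
      ring
  have hxu : ‖x - u‖ ≤ |x l - u l| := by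
    rw [pi_norm_le_iff_of_nonneg (abs_nonneg _)]
    intro k
    simpa [Real.norm_eq_abs] using hl k (Finset.mem_univ k)
  set x' : Fin d → ℝ := Function.update z l t with hx'def
  refine ⟨x', l, fun k hk => Function.update_of_ne hk _ _, ?_, ?_⟩
  · rw [lpnorm_one_eq_sum, lpnorm_one_eq_sum]
    have h1 : ∑ i, |x' i - z i| = |t - z l| := by
      rw [Finset.sum_eq_single l]
      · simp [hx'def]
      · intro k _ hk; simp [hx'def, Function.update_of_ne hk]
      · intro h; exact absurd (Finset.mem_univ l) h
    have h2 : ∑ i, |x i - z i| = |x l - z l| + s₀ :=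
      (Finset.add_sum_erase Finset.univ (fun k => |x k - z k|) (Finset.mem_univ l)).symm
    simp only [Pi.sub_apply]
    rw [h1, h2]
    calc |t - z l| ≤ |x l - z l| + |σ * s₀| := by
          have : t - z l = (x l - z l) + σ * s₀ := by rw [htdef]; ring
          rw [this]; exact abs_add_le _ _
      _ = |x l - z l| + s₀ := by rw [abs_mul, hσabs, one_mul, abs_of_nonneg hs₀]
  · have hxl : x' l = t := Function.update_self _ _ _
    have h1 : |t - u l| ≤ ‖x' - u‖ := by
      have := norm_le_pi_norm (x' - u) l
      simpa [Real.norm_eq_abs, hxl] using this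
    have h2 : ‖x' - v‖ ≤ |t - u l| := by
      rw [pi_norm_le_iff_of_nonneg (abs_nonneg _)]
      intro k
      simp only [Pi.sub_apply, Real.norm_eq_abs]
      rcases eq_or_ne k l with rfl | hk
      · rw [hxl, habs]
        have hxv : |x k - v k| ≤ |x k - u k| := by
          calc |x k - v k| ≤ ‖x - v‖ := by
                simpa [Real.norm_eq_abs] using norm_le_pi_norm (x - v) k
            _ ≤ ‖x - u‖ := hx
            _ ≤ |x k - u k| := hxu
        calc |t - v k| ≤ |σ * s₀| + |x k - v k| := by
              have : t - v k = σ * s₀ + (x k - v k) := by rw [htdef]; ring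
              rw [this]; exact abs_add_le _ _
          _ ≤ s₀ + |x k - u k| := by
              rw [abs_mul, hσabs, one_mul, abs_of_nonneg hs₀]; linarith
          _ = |x k - u k| + s₀ := by ring
      · have hzk : x' k = z k := Function.update_of_ne hk _ _
        rw [hzk]
        have hzx : |z k - x k| ≤ s₀ := by
          rw [hs₀def]
          calc |z k - x k| = |x k - z k| := abs_sub_comm _ _
            _ ≤ s₀ := Finset.single_le_sum (f := fun i => |x i - z i|)
              (fun _ _ => abs_nonneg _) (Finset.mem_erase.2 ⟨hk, Finset.mem_univ _⟩)
        have hxv : |x k - v k| ≤ |x l - u l| := by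
          calc |x k - v k| ≤ ‖x - v‖ := by
                simpa [Real.norm_eq_abs] using norm_le_pi_norm (x - v) k
            _ ≤ ‖x - u‖ := hx
            _ ≤ |x l - u l| := hxu
        calc |z k - v k| ≤ |z k - x k| + |x k - v k| := abs_sub_le _ _ _
          _ ≤ s₀ + |x l - u l| := add_le_add hzx hxv
          _ = |t - u l| := by rw [habs]; ring
    linarith
end
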